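/- For every integer n ≥ 1, the volume of the n-dimensional Euclidean unit ball satisfies (1/√(πn)) · (2πe/n)^{n/2} · (1 − 1/n) ≤ |Dₙ| ≤ (1/√(πn)) · (2πe/n)^{n/2}. -/

import Mathlib

/-! Write `x = n / 2`, so that `|Dₙ| = π^x / Γ(x + 1)`, and let
`g(x) = log (Γ(x + 1) / (√(2πx) (x/e)^x))` be the error of Stirling's formula. Since
`1 - 1/n ≤ e^{-1/n}`, both bounds follow from `0 ≤ g(n/2) ≤ 1/n`.

For integer `x`, `g(x) = log (stirlingSeq x / √π)`, which lies in `[0, 1/(12x)]`: the Stirling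
sequence decreases to `√π`, and Robbins' bound on its successive differences controls the rate.
For `x = m + 1/2` the duplication formula gives
`g(m + 1/2) = g(2m + 1) - g(m) + (m + 1/2) log (1 + 1/(2m)) - 1/2`, and the elementary bounds
`2t/(t + 2) ≤ log (1 + t) ≤ t` put the last term in `[1/(12m), 1/(4m)]`. -/

open MeasureTheory

/-- The Lebesgue volume `|Dₙ| = π^{n/2}/Γ(n/2+1)` of the closed Euclidean unit ball
in `ℝⁿ`. -/
noncomputable def unitBallVolume (n : ℕ) : ℝ :=
  (volume (Metric.closedBall (0 : EuclideanSpace ℝ (Fin n)) 1)).toReal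

open Real Stirling

noncomputable def stirlingGap (x : ℝ) : ℝ :=
  log (Gamma (x + 1) / (√(2 * π * x) * (x / exp 1) ^ x))

lemma Gamma_add_one_eq_mul_exp_stirlingGap {x : ℝ} (hx : 0 < x) :
    Gamma (x + 1) = √(2 * π * x) * (x / exp 1) ^ x * exp (stirlingGap x) := by
  rw [stirlingGap, exp_log (by positivity), mul_div_cancel₀ _ (by positivity)]

lemma stirlingGap_eq {x : ℝ} (hx : 0 < x) :
    stirlingGap x = log (Gamma (x + 1)) - (log (2 * π * x) / 2 + x * (log x - 1)) := by
  rw [stirlingGap, log_div (by positivity) (by positivity), log_mul (by positivity) (by positivity),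
    log_sqrt (by positivity), log_rpow (by positivity), log_div hx.ne' (exp_ne_zero 1), log_exp]

lemma stirlingGap_natCast {k : ℕ} (hk : k ≠ 0) :
    stirlingGap k = log (stirlingSeq k) - log π / 2 := by
  have hk' : (0 : ℝ) < k := by positivity
  rw [stirlingGap_eq hk', log_stirlingSeq_formula, Gamma_nat_eq_factorial,
    log_div hk'.ne' (exp_ne_zero 1), log_exp, log_mul (by positivity) hk'.ne',
    log_mul two_ne_zero pi_ne_zero, log_mul two_ne_zero hk'.ne']
  ring

lemma log_stirlingSeq_sub_le_log_sqrt_pi {k : ℕ} (hk : k ≠ 0) :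
    log (stirlingSeq k) - 1 / (12 * k) ≤ log √π := by
  set f : ℕ → ℝ := fun j ↦ log (stirlingSeq (j + 1)) - 1 / (12 * (j + 1 : ℕ))
  -- Robbins' bound `log s_j - log s_{j+1} ≤ 1/(12 j (j+1))` makes `f` increasing.
  have hf : Monotone f := monotone_nat_of_le_succ fun j ↦ by
    have := log_stirlingSeq_sdiff_le (j + 1)
    have : (1 : ℝ) / (12 * (j + 1 : ℕ) * ((j + 1 : ℕ) + 1)) =
        1 / (12 * (j + 1 : ℕ)) - 1 / (12 * (j + 1 + 1 : ℕ)) := by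
      push_cast; field_simp; ring
    simp only [f]
    linarith
  have hlim : Filter.Tendsto f Filter.atTop (nhds (log √π - 0)) := by
    refine ((continuousAt_log (by positivity)).tendsto.comp
      (tendsto_stirlingSeq_sqrt_pi.comp (Filter.tendsto_add_atTop_nat 1))).sub ?_
    simpa [div_eq_mul_inv] using tendsto_one_div_add_atTop_nhds_zero_nat.div_const (12 : ℝ)
  obtain ⟨j, rfl⟩ := Nat.exists_eq_succ_of_ne_zero hk
  simpa only [f, sub_zero] using hf.ge_of_tendsto hlim j

lemma stirlingGap_natCast_mem_Icc {k : ℕ} (hk : k ≠ 0) :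
    stirlingGap k ∈ Set.Icc 0 (1 / (12 * k : ℝ)) := by
  have hlow := log_le_log (by positivity) (sqrt_pi_le_stirlingSeq hk)
  have hupp := log_stirlingSeq_sub_le_log_sqrt_pi hk
  rw [log_sqrt pi_pos.le] at hlow hupp
  rw [stirlingGap_natCast hk]
  constructor <;> linarith

lemma stirlingGap_one_half : stirlingGap (1 / 2) = (1 - log 2) / 2 := by
  have hΓ : Gamma (1 / 2 + 1) = √π / 2 := by
    rw [Gamma_add_one (by norm_num), Gamma_one_half_eq]
    ring
  rw [stirlingGap_eq (by norm_num), hΓ, log_div (by positivity) two_ne_zero, log_sqrt pi_pos.le,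
    show 2 * π * (1 / 2) = π by ring, one_div, log_inv]
  ring

lemma stirlingGap_nat_add_half {m : ℕ} (hm : m ≠ 0) :
    stirlingGap (m + 1 / 2) = stirlingGap (2 * m + 1 : ℕ) - stirlingGap m
      + ((m + 1 / 2) * log (1 + 1 / (2 * m)) - 1 / 2) := by
  have hm' : (0 : ℝ) < m := by positivity
  -- Legendre duplication at `s = m + 1` expresses `Γ(m + 3/2)` through `(2m+1)!` and `m!`.
  have hdup := congrArg log (Gamma_mul_Gamma_add_half ((m : ℝ) + 1))
  rw [log_mul (by positivity) (by positivity), log_mul (by positivity) (by positivity),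
    log_mul (by positivity) (by positivity), log_rpow two_pos, log_sqrt pi_pos.le,
    show 2 * ((m : ℝ) + 1) = (2 * m + 1 : ℕ) + 1 by push_cast; ring,
    show (m : ℝ) + 1 + 1 / 2 = m + 1 / 2 + 1 by ring] at hdup
  rw [stirlingGap_eq (by positivity), stirlingGap_eq (by positivity), stirlingGap_eq hm']
  have h1 : log (1 + 1 / (2 * m)) = log (2 * m + 1) - log 2 - log m := by
    rw [show 1 + 1 / (2 * (m : ℝ)) = (2 * m + 1) / (2 * m) by field_simp,
      log_div (by positivity) (by positivity), log_mul two_ne_zero hm'.ne']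
    ring
  have h2 : log (m + 1 / 2) = log (2 * m + 1) - log 2 := by
    rw [show (m : ℝ) + 1 / 2 = (2 * m + 1) / 2 by ring, log_div (by positivity) two_ne_zero]
  push_cast at hdup ⊢
  rw [h1, h2, show 2 * π * (m + 1 / 2) = π * (2 * m + 1) by ring,
    log_mul pi_ne_zero (by positivity), mul_assoc, log_mul two_ne_zero (by positivity),
    log_mul pi_ne_zero (by positivity), mul_assoc, log_mul two_ne_zero (by positivity),
    log_mul pi_ne_zero (by positivity)]
  linear_combination hdup

lemma add_half_mul_log_one_add_sub_half_mem_Icc {x : ℝ} (hx : 1 / 2 ≤ x) :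
    (x + 1 / 2) * log (1 + 1 / (2 * x)) - 1 / 2 ∈ Set.Icc (1 / (12 * x)) (1 / (4 * x)) := by
  have hx' : 0 < x := by linarith
  constructor
  · calc 1 / (12 * x) ≤ (x + 1 / 2) * (2 * (1 / (2 * x)) / (1 / (2 * x) + 2)) - 1 / 2 := by
          field_simp
          nlinarith
      _ ≤ _ := by gcongr; exact le_log_one_add_of_nonneg (by positivity)
  · calc _ ≤ (x + 1 / 2) * (1 / (2 * x)) - 1 / 2 := by
          gcongr
          linarith [log_le_sub_one_of_pos (x := 1 + 1 / (2 * x)) (by positivity)]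
      _ = 1 / (4 * x) := by field_simp; ring

lemma stirlingGap_nat_add_half_mem_Icc {m : ℕ} (hm : m ≠ 0) :
    stirlingGap (m + 1 / 2) ∈ Set.Icc 0 (1 / (2 * m + 1 : ℝ)) := by
  have hm' : (1 : ℝ) ≤ m := by exact_mod_cast Nat.one_le_iff_ne_zero.2 hm
  obtain ⟨hodd_low, hodd_upp⟩ := stirlingGap_natCast_mem_Icc (k := 2 * m + 1) (by omega)
  obtain ⟨heven_low, heven_upp⟩ := stirlingGap_natCast_mem_Icc hm
  obtain ⟨hcorr_low, hcorr_upp⟩ :=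
    add_half_mul_log_one_add_sub_half_mem_Icc (x := m) (by linarith)
  have hsum : 1 / (12 * (2 * m + 1 : ℝ)) + 1 / (4 * m) ≤ 1 / (2 * m + 1) := by
    field_simp
    nlinarith
  rw [stirlingGap_nat_add_half hm]
  push_cast at hodd_low hodd_upp ⊢
  constructor <;> linarith

lemma stirlingGap_div_two_mem_Icc {n : ℕ} (hn : n ≠ 0) :
    stirlingGap (n / 2) ∈ Set.Icc 0 (1 / n : ℝ) := by
  obtain ⟨m, rfl | rfl⟩ := Nat.even_or_odd' n
  · have hm : m ≠ 0 := by omega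
    obtain ⟨hlow, hupp⟩ := stirlingGap_natCast_mem_Icc hm
    push_cast
    rw [mul_div_cancel_left₀ _ two_ne_zero]
    refine ⟨hlow, hupp.trans (one_div_le_one_div_of_le (by positivity) ?_)⟩
    linarith
  · rcases eq_or_ne m 0 with rfl | hm
    · norm_num [stirlingGap_one_half]
      constructor <;> linarith [log_nonneg one_le_two, log_two_lt_d9]
    · push_cast
      rw [show (2 * m + 1 : ℝ) / 2 = m + 1 / 2 by ring]
      exact stirlingGap_nat_add_half_mem_Icc hm

lemma unitBallVolume_eq_mul_exp_neg_stirlingGap {n : ℕ} (hn : n ≠ 0) :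
    unitBallVolume n =
      1 / √(π * n) * (2 * π * exp 1 / n) ^ ((n : ℝ) / 2) * exp (-stirlingGap (n / 2)) := by
  have : Nonempty (Fin n) := Fin.pos_iff_nonempty.mp (by omega)
  have hx : (0 : ℝ) < n / 2 := by positivity
  rw [unitBallVolume, EuclideanSpace.volume_closedBall, Fintype.card_fin, ENNReal.ofReal_one,
    one_pow, one_mul, ENNReal.toReal_ofReal (by positivity),
    Gamma_add_one_eq_mul_exp_stirlingGap hx, exp_neg, show 2 * π * (n / 2) = π * n by ring]
  have hpow :
      (2 * π * exp 1 / n) ^ ((n : ℝ) / 2) * ((n / 2) / exp 1) ^ ((n : ℝ) / 2) = √π ^ n := by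
    rw [← mul_rpow (by positivity) (by positivity), sqrt_eq_rpow, ← rpow_natCast,
      ← rpow_mul pi_pos.le]
    congr 1
    · field_simp
    · ring
  have : 0 < √(π * n) := by positivity
  rw [← hpow]
  field_simp

/-- For every `n ≥ 1`,
`(1/√(πn)) (2πe/n)^{n/2} (1 - 1/n) ≤ |Dₙ| ≤ (1/√(πn)) (2πe/n)^{n/2}`. -/
theorem stmt12 (n : ℕ) (hn : 1 ≤ n) :
    1 / Real.sqrt (Real.pi * n) * (2 * Real.pi * Real.exp 1 / n) ^ ((n : ℝ) / 2)
        * (1 - 1 / (n : ℝ))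
      ≤ unitBallVolume n
    ∧ unitBallVolume n
      ≤ 1 / Real.sqrt (Real.pi * n) * (2 * Real.pi * Real.exp 1 / n) ^ ((n : ℝ) / 2) := by
  obtain ⟨hgap_nonneg, hgap_le⟩ := stirlingGap_div_two_mem_Icc (n := n) (by omega)
  rw [unitBallVolume_eq_mul_exp_neg_stirlingGap (by omega)]
  have hT : 0 ≤ 1 / √(π * n) * (2 * π * exp 1 / n) ^ ((n : ℝ) / 2) := by positivity
  constructor
  · gcongr
    calc 1 - 1 / (n : ℝ) ≤ exp (-(1 / n)) := by linarith [add_one_le_exp (-(1 / (n : ℝ)))]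
      _ ≤ exp (-stirlingGap (n / 2)) := by gcongr
  · exact mul_le_of_le_one_right hT (exp_le_one_iff.2 (by linarith))
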